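/- arXiv:1205.6359 — 4 statements merged into one kernel-verified Lean document; each statement's English description precedes it below -/
import Mathlib

section
/- Let (u,v) and (w,x) be two edges of a MUL-tree T lying on a path P_{u,x} = (u, v, …, w, x), and suppose both edges are informative (each resolves at least one quartet). Then Δ(u,v) ⊆ Δ(w,x) if and only if M_v^{uv} = M_x^{wx}. -/
open SimpleGraph

variable {V V' L L' : Type}

/-- Degree of a vertex, via `Set.ncard` of the neighbor set (no instances needed). -/
noncomputable def deg (G : SimpleGraph V) (v : V) : ℕ := (G.neighborSet v).ncard

/-- A leaf is a vertex of degree one. -/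
def IsLeaf (G : SimpleGraph V) (v : V) : Prop := deg G v = 1

/-- The vertex set of the subtree `T_u^{uv}`: vertices reachable from `u`
after deleting the edge `(u,v)`. -/
def side (G : SimpleGraph V) (u v : V) : Set V :=
  {w | (G.deleteEdges {s(u, v)}).Reachable w u}

/-- Labels appearing on leaves of the `u`-side of the edge `(u,v)`. -/
def sideLabels (G : SimpleGraph V) (ψ : V → L) (u v : V) : Set L :=
  {m | ∃ w, IsLeaf G w ∧ w ∈ side G u v ∧ ψ w = m}

/-- `M_u^{uv}`: labels appearing on leaves of `T_u^{uv}` but not of `T_v^{uv}`. -/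
def Mside (G : SimpleGraph V) (ψ : V → L) (u v : V) : Set L :=
  sideLabels G ψ u v \ sideLabels G ψ v u

/-- `C^{uv}`: labels appearing on leaves of both sides of the edge `(u,v)`. -/
def Cside (G : SimpleGraph V) (ψ : V → L) (u v : V) : Set L :=
  sideLabels G ψ u v ∩ sideLabels G ψ v u

/-- A quartet `ab|cd`: an unordered pair of unordered pairs of labels. -/
abbrev Quartet (L : Type) := Sym2 (Sym2 L)

/-- The edge `(u,v)` resolves the quartet `q = ab|cd` when `{a,b} ⊆ M_u^{uv}` and
`{c,d} ⊆ M_v^{uv}` (with `a,b,c,d` four distinct labels). -/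
def Resolves (G : SimpleGraph V) (ψ : V → L) (u v : V) (q : Quartet L) : Prop :=
  G.Adj u v ∧ ∃ a b c d : L, a ≠ b ∧ c ≠ d ∧
    a ∈ Mside G ψ u v ∧ b ∈ Mside G ψ u v ∧
    c ∈ Mside G ψ v u ∧ d ∈ Mside G ψ v u ∧
    q = s(s(a, b), s(c, d))

/-- `Δ(u,v)`: the set of quartets resolved by the edge `(u,v)`. -/
def Δ (G : SimpleGraph V) (ψ : V → L) (u v : V) : Set (Quartet L) :=
  {q | Resolves G ψ u v q}

/-- The information content `I(T)`: all quartets resolved by some edge. -/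
def infoContent (G : SimpleGraph V) (ψ : V → L) : Set (Quartet L) :=
  {q | ∃ u v, Resolves G ψ u v q}

/-- The label set `M`: labels carried by the leaves. -/
def labelSet (G : SimpleGraph V) (ψ : V → L) : Set L :=
  {m | ∃ v, IsLeaf G v ∧ ψ v = m}

/-- Singly labeled: the labeling map is injective on leaves. -/
def SinglyLabeled (G : SimpleGraph V) (ψ : V → L) : Prop :=
  ∀ v w, IsLeaf G v → IsLeaf G w → ψ v = ψ w → v = w

/-- A MUL-tree: a finite unrooted tree (encoded as the nontrivial connected component
of `G`; vertices outside `G.support` are unused isolated vertices) together with a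
labeling `ψ` of its leaves, such that every internal (non-leaf) node has degree ≥ 3.
The label set `M` is `labelSet G ψ`, onto which `ψ` (restricted to leaves) is
automatically surjective. -/
structure MulTree (V L : Type) : Type where
  G : SimpleGraph V
  ψ : V → L
  fin : Finite V
  acyclic : G.IsAcyclic
  conn : ∀ u ∈ G.support, ∀ v ∈ G.support, G.Reachable u v
  internal3 : ∀ v ∈ G.support, ¬ IsLeaf G v → 3 ≤ deg G v

/-- `y` lies on the (unique) path between `a` and `b`: `a,b` are connected and
every walk from `a` to `b` passes through `y`. -/
def OnPath (G : SimpleGraph V) (y a b : V) : Prop :=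
  G.Reachable a b ∧ ∀ p : G.Walk a b, y ∈ p.support

/-- The edges `(u,v)` and `(w,x)` lie, in this order, on the path
`P_{u,x} = (u, v, …, w, x)` (possibly `v = w`). -/
def PathConfig (G : SimpleGraph V) (u v w x : V) : Prop :=
  G.Adj u v ∧ G.Adj w x ∧ OnPath G v u x ∧ OnPath G w v x

/-- An internal edge: both endpoints are internal (non-leaf) nodes. -/
def InternalEdge (G : SimpleGraph V) (a b : V) : Prop :=
  G.Adj a b ∧ ¬ IsLeaf G a ∧ ¬ IsLeaf G b

/-- Contracting the edge `(a,b)`: identify `b` with `a` (the vertex `b` becomes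
an unused isolated vertex). -/
def contractEdge (G : SimpleGraph V) (a b : V) : SimpleGraph V where
  Adj x y := x ≠ y ∧ x ≠ b ∧ y ≠ b ∧
    (G.Adj x y ∨ (x = a ∧ G.Adj b y) ∨ (y = a ∧ G.Adj x b))
  symm := ⟨by
    rintro x y ⟨h1, h2, h3, h4 | ⟨hx, hy⟩ | ⟨hy, hx⟩⟩
    · exact ⟨h1.symm, h3, h2, Or.inl h4.symm⟩
    · exact ⟨h1.symm, h3, h2, Or.inr (Or.inr ⟨hx, hy.symm⟩)⟩
    · exact ⟨h1.symm, h3, h2, Or.inr (Or.inl ⟨hy, hx.symm⟩)⟩⟩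
  loopless := ⟨fun x h => h.1 rfl⟩

/-- `PruneSpec G v₀ G'` : `G'` is the result of pruning the leaf `v₀` from `G`:
delete `v₀` (i.e. its unique edge); if as a result the neighbor `u` of `v₀`
becomes a degree-two node, additionally delete `u` and connect its former two
other neighbors by an edge. Deleted vertices become unused isolated vertices. -/
def PruneSpec (G : SimpleGraph V) (v₀ : V) (G' : SimpleGraph V) : Prop :=
  ∃ u, G.neighborSet v₀ = {u} ∧
    ((deg G u ≠ 3 ∧ G' = G.deleteEdges {s(u, v₀)}) ∨
     (deg G u = 3 ∧ ∃ p q, p ≠ q ∧ p ≠ v₀ ∧ q ≠ v₀ ∧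
        G.neighborSet u = {v₀, p, q} ∧
        G' = G.deleteEdges {s(u, v₀), s(u, p), s(u, q)} ⊔ fromEdgeSet {s(p, q)}))

/-- A leaf is prunable if pruning it leaves the information content unchanged. -/
def Prunable (G : SimpleGraph V) (ψ : V → L) (v₀ : V) : Prop :=
  IsLeaf G v₀ ∧ ∃ G', PruneSpec G v₀ G' ∧ infoContent G' ψ = infoContent G ψ

/-- An internal edge is contractible if contracting it leaves the information
content unchanged. -/
def Contractible (G : SimpleGraph V) (ψ : V → L) (a b : V) : Prop :=
  InternalEdge G a b ∧ infoContent (contractEdge G a b) ψ = infoContent G ψ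

/-- Maximally reduced: no prunable leaf and no contractible internal edge. -/
def MaximallyReduced (G : SimpleGraph V) (ψ : V → L) : Prop :=
  (∀ v, ¬ Prunable G ψ v) ∧ (∀ a b, ¬ Contractible G ψ a b)

/-- One reduction step: prune a prunable leaf or contract a contractible
internal edge. -/
def ReduceStep (ψ : V → L) (G G' : SimpleGraph V) : Prop :=
  (∃ v₀, Prunable G ψ v₀ ∧ PruneSpec G v₀ G') ∨
  (∃ a b, Contractible G ψ a b ∧ G' = contractEdge G a b)

/-- `H` is a maximally reduced form (MRF) of `G`: obtained from `G` by repeatedly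
pruning prunable leaves and contracting contractible internal edges, until
neither operation is possible. -/
def IsMRF (ψ : V → L) (G H : SimpleGraph V) : Prop :=
  Relation.ReflTransGen (ReduceStep ψ) G H ∧ MaximallyReduced H ψ

/-- Label-preserving isomorphism of (leaf-labeled) trees: a graph isomorphism
between the supports mapping leaves to leaves and preserving leaf labels. -/
def LIso (G : SimpleGraph V) (ψ : V → L) (G' : SimpleGraph V') (ψ' : V' → L) : Prop :=
  ∃ f : G.support ≃ G'.support,
    (∀ x y : G.support, G'.Adj (f x).1 (f y).1 ↔ G.Adj x.1 y.1) ∧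
    (∀ x : G.support, IsLeaf G x.1 → IsLeaf G' (f x).1 ∧ ψ' (f x).1 = ψ x.1)

/-- The set of internal edges of `G`, as unordered pairs. -/
def internalEdgeSet (G : SimpleGraph V) : Set (Sym2 V) :=
  {e | ∃ a b, e = s(a, b) ∧ InternalEdge G a b}

/-- The subtree `T_z^{yz}` branches out from the path `P_{u,x}` :
`y` is an interior vertex of the path and `z` is off the path. -/
def BranchesOut (G : SimpleGraph V) (u x y z : V) : Prop :=
  G.Adj y z ∧ OnPath G y u x ∧ y ≠ u ∧ y ≠ x ∧ ¬ OnPath G z u x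

/-- Vertices of the minimal subtree spanning all leaves labeled `ℓ`. -/
def spanVerts (G : SimpleGraph V) (ψ : V → L) (ℓ : L) : Set V :=
  {p | ∃ c d, IsLeaf G c ∧ IsLeaf G d ∧ ψ c = ℓ ∧ ψ d = ℓ ∧ OnPath G p c d}

/-- Degree of `y` within the subtree induced on the vertex set `S`. -/
noncomputable def degIn (G : SimpleGraph V) (S : Set V) (y : V) : ℕ :=
  (G.neighborSet y ∩ S).ncard

/-- One step of deleting a leaf labeled `ℓ` (by pruning, with suppression). -/
def PruneLabelStep (ψ : V → L) (ℓ : L) (G G' : SimpleGraph V) : Prop :=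
  ∃ v₀, IsLeaf G v₀ ∧ ψ v₀ = ℓ ∧ PruneSpec G v₀ G'

/-!
Removing the edge `(u,v)` of a tree leaves two sides. The `u`-side of `(u,v)` and the `x`-side of
`(w,x)` are disjoint: a common vertex would yield a walk from `u` to `x` using neither of the
bridges `(u,v)`, `(w,x)`, although it must pass through `v` and then `w`. Hence the `u`-side of
`(u,v)` lies in the `w`-side of `(w,x)` and the `x`-side of `(w,x)` lies in the `v`-side of
`(u,v)`, which gives `M_u^{uv} ⊆ M_w^{wx}` and `M_x^{wx} ⊆ M_v^{uv}`.

So if `M_v^{uv} = M_x^{wx}`, every quartet resolved by `(u,v)` is resolved by `(w,x)`. Conversely,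
since `(u,v)` is informative, any `c ∈ M_v^{uv}` can be placed in a quartet `ab|cd` of `Δ(u,v)`;
`(w,x)` resolves it, and `ab` cannot be its `x`-side pair because `a ∈ M_u^{uv}` is disjoint from
`M_v^{uv} ⊇ M_x^{wx}`, so `c ∈ M_x^{wx}`.
-/

section Sides

variable {G : SimpleGraph V}

lemma side_eq_setOf_reachable_swap (a b : V) : side G a b = {z | (G.deleteEdges {s(b, a)}).Reachable z a} := by
  rw [side, Sym2.eq_swap]

lemma reachable_of_mem_side {a b z : V} (hz : z ∈ side G a b) : G.Reachable z a :=
  hz.mono (deleteEdges_le _)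

lemma mem_side_or_mem_side_of_reachable {a b z : V} (hz : G.Reachable z a) :
    z ∈ side G a b ∨ z ∈ side G b a := by
  obtain ⟨p⟩ := hz
  induction p with
  | nil => exact Or.inl (Reachable.refl _)
  | @cons z z' a hzz' _ ih =>
    by_cases he : s(z, z') = s(a, b)
    · rcases Sym2.eq_iff.mp he with ⟨rfl, rfl⟩ | ⟨rfl, rfl⟩
      · exact Or.inl (Reachable.refl _)
      · exact Or.inr (Reachable.refl _)
    · have hadj : (G.deleteEdges {s(a, b)}).Adj z z' := by simp [hzz', he]
      rw [side_eq_setOf_reachable_swap b a] at ih ⊢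
      exact ih.imp (hadj.reachable.trans ·) (hadj.reachable.trans ·)

lemma side_subset_side_of_disjoint {a b c d : V} (hac : G.Reachable a c)
    (hdisj : Disjoint (side G a b) (side G d c)) : side G a b ⊆ side G c d := fun _ hz =>
  (mem_side_or_mem_side_of_reachable ((reachable_of_mem_side hz).trans hac)).resolve_right
    (hdisj.notMem_of_mem_left hz)

lemma sideLabels_mono {ψ : V → L} {a b c d : V} (hs : side G a b ⊆ side G c d) :
    sideLabels G ψ a b ⊆ sideLabels G ψ c d :=
  fun _ ⟨z, hleaf, hz, hψ⟩ => ⟨z, hleaf, hs hz, hψ⟩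

lemma Mside_subset_Mside {ψ : V → L} {a b c d : V} (hab : side G a b ⊆ side G c d)
    (hdc : side G d c ⊆ side G b a) : Mside G ψ a b ⊆ Mside G ψ c d :=
  fun _ ⟨hm, hm'⟩ => ⟨sideLabels_mono hab hm, fun h => hm' (sideLabels_mono hdc h)⟩

lemma Mside_disjoint (ψ : V → L) (a b : V) : Disjoint (Mside G ψ a b) (Mside G ψ b a) :=
  Set.disjoint_left.mpr fun _ hm hm' => hm.2 hm'.1

lemma OnPath.reachable_left {y a b : V} (h : OnPath G y a b) : G.Reachable a y := by
  classical
  obtain ⟨⟨p⟩, hp⟩ := h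
  exact ⟨p.takeUntil y (hp p)⟩

end Sides

namespace PathConfig

variable {G : SimpleGraph V} {u v w x : V}

lemma disjoint_side (hac : G.IsAcyclic) (h : PathConfig G u v w x) :
    Disjoint (side G u v) (side G x w) := by
  classical
  obtain ⟨huv, hwx, ⟨_, hv_path⟩, ⟨_, hw_path⟩⟩ := h
  have bridge := isAcyclic_iff_forall_adj_isBridge.mp hac
  refine Set.disjoint_left.mpr fun z ⟨p⟩ ⟨q⟩ => ?_
  have hv := hv_path (p.reverse.mapLe (deleteEdges_le _) |>.append (q.mapLe (deleteEdges_le _)))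
  simp only [Walk.mem_support_append_iff, Walk.support_mapLe_eq_support,
    Walk.support_reverse, List.mem_reverse] at hv
  rcases hv with hv | hv
  · exact isBridge_iff.mp (bridge huv) ⟨p.reverse.takeUntil v (by simpa using hv)⟩
  · have r : (G.deleteEdges {s(x, w)}).Walk v x := q.dropUntil v hv
    have hw := hw_path (r.mapLe (deleteEdges_le _))
    rw [Walk.support_mapLe_eq_support] at hw
    exact isBridge_iff.mp (bridge hwx.symm) ⟨(r.dropUntil w hw).reverse⟩

lemma Mside_left_subset (hac : G.IsAcyclic) (h : PathConfig G u v w x) (ψ : V → L) :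
    Mside G ψ u v ⊆ Mside G ψ w x :=
  have hvw := h.2.2.2.reachable_left
  Mside_subset_Mside
    (side_subset_side_of_disjoint (h.1.reachable.trans hvw) (h.disjoint_side hac))
    (side_subset_side_of_disjoint (h.2.1.symm.reachable.trans hvw.symm)
      (h.disjoint_side hac).symm)

lemma Mside_right_subset (hac : G.IsAcyclic) (h : PathConfig G u v w x) (ψ : V → L) :
    Mside G ψ x w ⊆ Mside G ψ v u :=
  have hvw := h.2.2.2.reachable_left
  Mside_subset_Mside
    (side_subset_side_of_disjoint (h.2.1.symm.reachable.trans hvw.symm)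
      (h.disjoint_side hac).symm)
    (side_subset_side_of_disjoint (h.1.reachable.trans hvw) (h.disjoint_side hac))

end PathConfig

section Quartets

variable {G : SimpleGraph V} {ψ : V → L} {u v w x : V}

lemma Δ_subset_Δ_of_Mside_subset (hwx : G.Adj w x) (hl : Mside G ψ u v ⊆ Mside G ψ w x)
    (hr : Mside G ψ v u ⊆ Mside G ψ x w) : Δ G ψ u v ⊆ Δ G ψ w x := by
  rintro _ ⟨_, a, b, c, d, hab, hcd, ha, hb, hc, hd, rfl⟩
  exact ⟨hwx, a, b, c, d, hab, hcd, hl ha, hl hb, hr hc, hr hd, rfl⟩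

lemma exists_mem_Δ_of_mem_Mside (hne : (Δ G ψ u v).Nonempty) {c : L}
    (hc : c ∈ Mside G ψ v u) :
    ∃ a b d, a ∈ Mside G ψ u v ∧ s(s(a, b), s(c, d)) ∈ Δ G ψ u v := by
  obtain ⟨_, huv, a, b, c₁, c₂, hab, hc₁₂, ha, hb, hc₁, hc₂, -⟩ := hne
  obtain ⟨d, hd, hdc⟩ : ∃ d ∈ Mside G ψ v u, c ≠ d := by
    by_cases h : c = c₁
    · exact ⟨c₂, hc₂, h ▸ hc₁₂⟩
    · exact ⟨c₁, hc₁, h⟩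
  exact ⟨a, b, d, ha, huv, a, b, c, d, hab, hdc, ha, hb, hc, hd, rfl⟩

lemma Mside_subset_of_Δ_subset (hsub : Δ G ψ u v ⊆ Δ G ψ w x) (hne : (Δ G ψ u v).Nonempty)
    (hr : Mside G ψ x w ⊆ Mside G ψ v u) : Mside G ψ v u ⊆ Mside G ψ x w := by
  intro c hc
  obtain ⟨a, b, d, ha, hq⟩ := exists_mem_Δ_of_mem_Mside hne hc
  obtain ⟨_, _, _, c', d', -, -, -, -, hc', hd', heq⟩ := hsub hq
  rcases Sym2.eq_iff.mp heq with ⟨-, hcd⟩ | ⟨hab, -⟩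
  · rcases Sym2.eq_iff.mp hcd with ⟨rfl, -⟩ | ⟨rfl, -⟩
    exacts [hc', hd']
  · have ha_x : a ∈ Mside G ψ x w := by
      rcases Sym2.eq_iff.mp hab with ⟨rfl, -⟩ | ⟨rfl, -⟩
      exacts [hc', hd']
    exact absurd (hr ha_x) ((Mside_disjoint ψ u v).notMem_of_mem_left ha)

end Quartets

theorem stmt2_general (T : MulTree V L) (u v w x : V) (h : PathConfig T.G u v w x)
    (h1 : (Δ T.G T.ψ u v).Nonempty) :
    Δ T.G T.ψ u v ⊆ Δ T.G T.ψ w x ↔ Mside T.G T.ψ v u = Mside T.G T.ψ x w := by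
  have hr := h.Mside_right_subset T.acyclic T.ψ
  refine ⟨fun hsub => (Mside_subset_of_Δ_subset hsub h1 hr).antisymm hr, fun hM => ?_⟩
  exact Δ_subset_Δ_of_Mside_subset h.2.1 (h.Mside_left_subset T.acyclic T.ψ) hM.subset

/-- For informative edges `(u,v)` and `(w,x)` on a path
`P_{u,x} = (u,v,…,w,x)`, `Δ(u,v) ⊆ Δ(w,x)` iff `M_v^{uv} = M_x^{wx}`. -/
theorem stmt2 (T : MulTree V L) (u v w x : V) (h : PathConfig T.G u v w x)
    (h1 : (Δ T.G T.ψ u v).Nonempty) (h2 : (Δ T.G T.ψ w x).Nonempty) :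
    Δ T.G T.ψ u v ⊆ Δ T.G T.ψ w x ↔ Mside T.G T.ψ v u = Mside T.G T.ψ x w :=
  stmt2_general T u v w x h h1
end

section
/- Let (u,v) and (w,x) be two edges of a MUL-tree T lying on a path P_{u,x} = (u, v, …, w, x), all edges on this path being informative, and suppose Δ(u,v) ⊆ Δ(w,x). Then for every edge (y,z) on P_{u,x} oriented so that v is on the same side of (y,z) as u (i.e., y lies between v and z on the path), one has Δ(u,v) ⊆ Δ(y,z) ⊆ Δ(w,x). -/
open SimpleGraph

variable {V V' L L' : Type}

/-!
In a tree every edge `(p, q)` splits the vertices into `side p q` and `side q p`. For the edges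
`(u, v)`, `(y, z)`, `(w, x)`, met in this order and oriented the same way along the path, the
sides nest: `side u v ⊆ side y z ⊆ side w x` and `side x w ⊆ side z y ⊆ side v u`, hence so do
the label sets `M`. A quartet `ab|cd ∈ Δ(u,v)` also lies in `Δ(w,x)`, and the nesting forbids
`(w, x)` from resolving it the other way round, so `c, d ∈ M_x^{wx} ⊆ M_z^{yz}` and `(y, z)`
resolves it. Conversely, for `ab|cd ∈ Δ(y,z)` the pair `{c, d}` lies in `M_v^{uv}`; completing
it by a pair resolved by `(u, v)` (here `Δ(u,v) ≠ ∅` is used) gives a quartet of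
`Δ(u,v) ⊆ Δ(w,x)`, which forces `c, d ∈ M_x^{wx}`.
-/

section Sides

variable {G : SimpleGraph V}

lemma mem_side_self (u v : V) : u ∈ side G u v := Reachable.refl u

lemma reachable_of_mem_side_s3 {u v t : V} (h : t ∈ side G u v) : G.Reachable t u :=
  h.mono (deleteEdges_le _)

lemma mem_side_of_adj {r s t t' : V} (ht : t ∈ side G r s) (hadj : G.Adj t' t)
    (hne : s(t', t) ≠ s(r, s)) : t' ∈ side G r s :=
  (deleteEdges_adj.mpr ⟨hadj, hne⟩).reachable.trans ht

lemma SimpleGraph.Walk.reachable_deleteEdges_of_notMem_edges {H : SimpleGraph V} {a b : V}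
    (W : H.Walk a b) (hH : H ≤ G) {e : Sym2 V} (he : e ∉ W.edges) :
    (G.deleteEdges {e}).Reachable a b :=
  ⟨(W.mapLe hH).toDeleteEdge e (by rwa [Walk.edges_mapLe_eq_edges])⟩

lemma SimpleGraph.Walk.reachable_of_mem_support {H : SimpleGraph V} {a b t : V} (W : H.Walk a b)
    (ht : t ∈ W.support) : H.Reachable a t := by
  classical
  exact ⟨W.takeUntil t ht⟩

lemma mem_side_or_mem_side {t p : V} (q : V) (h : G.Reachable t p) :
    t ∈ side G p q ∨ t ∈ side G q p := by
  obtain ⟨W⟩ := h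
  induction W with
  | nil => exact Or.inl (mem_side_self _ _)
  | @cons a b p hab W ih =>
    by_cases he : s(a, b) = s(p, q)
    · rcases Sym2.eq_iff.mp he with ⟨rfl, rfl⟩ | ⟨rfl, rfl⟩
      · exact Or.inl (mem_side_self _ _)
      · exact Or.inr (mem_side_self _ _)
    · rcases ih with h | h
      · exact Or.inl (mem_side_of_adj h hab he)
      · exact Or.inr (mem_side_of_adj h hab (by rwa [Sym2.eq_swap (a := q)]))

lemma disjoint_side (hac : G.IsAcyclic) {p q : V} (hpq : G.Adj p q) :
    Disjoint (side G p q) (side G q p) := by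
  refine Set.disjoint_left.mpr fun t hp hq => ?_
  have hq : (G.deleteEdges {s(q, p)}).Reachable t q := hq
  rw [Sym2.eq_swap] at hq
  exact isBridge_iff.mp (isAcyclic_iff_forall_adj_isBridge.mp hac hpq) (hp.symm.trans hq)

lemma mem_side_of_onPath (hac : G.IsAcyclic) {p q a : V} (hpq : G.Adj p q)
    (h : OnPath G p a q) : a ∈ side G p q := by
  refine (mem_side_or_mem_side p h.1).resolve_left fun ha => ?_
  obtain ⟨W⟩ := ha
  have hpW := h.2 (W.mapLe (deleteEdges_le _))
  rw [Walk.support_mapLe_eq_support] at hpW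
  exact (disjoint_side hac hpq).notMem_of_mem_left (mem_side_self p q)
    ((W.reachable_of_mem_support hpW).symm.trans W.reachable)

lemma OnPath.symm {y a b : V} (h : OnPath G y a b) : OnPath G y b a :=
  ⟨h.1.symm, fun W => by simpa using h.2 W.reverse⟩

lemma mem_edges_of_mem_side_of_mem_side (hac : G.IsAcyclic) {p q t t' : V} (hpq : G.Adj p q)
    {H : SimpleGraph V} (hH : H ≤ G) (W : H.Walk t t') (ht : t ∈ side G p q)
    (ht' : t' ∈ side G q p) : s(p, q) ∈ W.edges := by
  by_contra he
  exact (disjoint_side hac hpq).notMem_of_mem_left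
    ((W.reachable_deleteEdges_of_notMem_edges hH he).symm.trans ht) ht'

lemma mem_side_of_separates (hac : G.IsAcyclic) {p q r s t t' : V} (hpq : G.Adj p q)
    (ht : t ∈ side G p q) (ht' : t' ∈ side G q p) (htr : t ∈ side G r s)
    (ht'r : t' ∈ side G r s) : p ∈ side G r s := by
  obtain ⟨W⟩ := htr.trans ht'r.symm
  have hpW := W.fst_mem_support_of_mem_edges
    (mem_edges_of_mem_side_of_mem_side hac hpq (deleteEdges_le _) W ht ht')
  exact (W.reachable_of_mem_support hpW).symm.trans htr

lemma side_subset_side {p q r s : V} (hpq : G.Adj p q) (hne : s(p, q) ≠ s(r, s))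
    (hq : q ∈ side G r s) (hs : s ∉ side G p q) : side G p q ⊆ side G r s := by
  intro t ⟨W⟩
  have hrs : s(r, s) ∉ W.edges := fun hW =>
    hs ((W.reachable_of_mem_support (W.snd_mem_support_of_mem_edges hW)).symm.trans W.reachable)
  exact (W.reachable_deleteEdges_of_notMem_edges (deleteEdges_le _) hrs).trans
    (mem_side_of_adj hq hpq hne)

lemma side_subset_side_swap (hac : G.IsAcyclic) {p q r s : V} (hrs : G.Adj r s)
    (h : side G p q ⊆ side G r s) : side G s r ⊆ side G q p := by
  intro t ht
  have htp : G.Reachable t p := (reachable_of_mem_side_s3 ht).trans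
    (hrs.symm.reachable.trans (reachable_of_mem_side_s3 (h (mem_side_self p q))).symm)
  exact (mem_side_or_mem_side q htp).resolve_left fun htpq =>
    (disjoint_side hac hrs).notMem_of_mem_left (h htpq) ht

end Sides

section Labels

variable {G : SimpleGraph V} {ψ : V → L}

lemma sideLabels_mono_s3 {u v y z : V} (h : side G u v ⊆ side G y z) :
    sideLabels G ψ u v ⊆ sideLabels G ψ y z :=
  fun _ ⟨t, ht, hts, htm⟩ => ⟨t, ht, h hts, htm⟩

lemma Mside_subset_Mside_s3 {u v y z : V} (h₁ : side G u v ⊆ side G y z)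
    (h₂ : side G z y ⊆ side G v u) : Mside G ψ u v ⊆ Mside G ψ y z :=
  fun _ ⟨hm, hm'⟩ => ⟨sideLabels_mono_s3 h₁ hm, fun h => hm' (sideLabels_mono_s3 h₂ h)⟩

lemma notMem_Mside_of_mem_Mside {u v : V} {m : L} (h : m ∈ Mside G ψ u v) :
    m ∉ Mside G ψ v u :=
  fun h' => h'.2 h.1

lemma Resolves.mem_Mside_of_notMem {w x : V} {a b c d : L}
    (h : Resolves G ψ w x s(s(a, b), s(c, d))) (ha : a ∉ Mside G ψ x w) :
    c ∈ Mside G ψ x w ∧ d ∈ Mside G ψ x w := by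
  obtain ⟨-, a', b', c', d', -, -, -, -, hc', hd', hq⟩ := h
  rcases Sym2.eq_iff.mp hq with ⟨-, hcd⟩ | ⟨hab, -⟩
  · rcases Sym2.eq_iff.mp hcd with ⟨rfl, rfl⟩ | ⟨rfl, rfl⟩
    · exact ⟨hc', hd'⟩
    · exact ⟨hd', hc'⟩
  · rcases Sym2.eq_iff.mp hab with ⟨rfl, -⟩ | ⟨rfl, -⟩
    · exact (ha hc').elim
    · exact (ha hd').elim

lemma Δ_subset_of_Mside_subset {u v w x y z : V} (hyz : G.Adj y z)
    (hsub : Δ G ψ u v ⊆ Δ G ψ w x) (huv : Mside G ψ u v ⊆ Mside G ψ y z)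
    (hxw : Mside G ψ x w ⊆ Mside G ψ z y) (hzy : Mside G ψ z y ⊆ Mside G ψ v u) :
    Δ G ψ u v ⊆ Δ G ψ y z := by
  rintro _ ⟨hadj, a, b, c, d, hab, hcd, ha, hb, hc, hd, rfl⟩
  obtain ⟨hc', hd'⟩ := (hsub ⟨hadj, a, b, c, d, hab, hcd, ha, hb, hc, hd, rfl⟩).mem_Mside_of_notMem
    fun ha' => notMem_Mside_of_mem_Mside ha (hzy (hxw ha'))
  exact ⟨hyz, a, b, c, d, hab, hcd, huv ha, huv hb, hxw hc', hxw hd', rfl⟩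

lemma Δ_subset_of_Mside_subset_of_nonempty {u v w x y z : V} (hne : (Δ G ψ u v).Nonempty)
    (hsub : Δ G ψ u v ⊆ Δ G ψ w x) (hyz : Mside G ψ y z ⊆ Mside G ψ w x)
    (hxw : Mside G ψ x w ⊆ Mside G ψ z y) (hzy : Mside G ψ z y ⊆ Mside G ψ v u) :
    Δ G ψ y z ⊆ Δ G ψ w x := by
  rintro _ ⟨-, a, b, c, d, hab, hcd, ha, hb, hc, hd, rfl⟩
  obtain ⟨_, huv, a₀, b₀, -, -, hab₀, -, ha₀, hb₀, -⟩ := hne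
  have hres : Resolves G ψ w x s(s(a₀, b₀), s(c, d)) :=
    hsub ⟨huv, a₀, b₀, c, d, hab₀, hcd, ha₀, hb₀, hzy hc, hzy hd, rfl⟩
  obtain ⟨hc', hd'⟩ := hres.mem_Mside_of_notMem
    fun ha' => notMem_Mside_of_mem_Mside ha₀ (hzy (hxw ha'))
  exact ⟨hres.1, a, b, c, d, hab, hcd, hyz ha, hyz hb, hc', hd', rfl⟩

end Labels

theorem stmt3_general (T : MulTree V L) (u v w x : V) (h : PathConfig T.G u v w x)
    (hall : ∀ p q : V, T.G.Adj p q → OnPath T.G p u x → OnPath T.G q p x →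
      (Δ T.G T.ψ p q).Nonempty)
    (hsub : Δ T.G T.ψ u v ⊆ Δ T.G T.ψ w x)
    (y z : V) (hyz : T.G.Adj y z) (hz : OnPath T.G z y x)
    (hv : v ∈ side T.G y z) :
    Δ T.G T.ψ u v ⊆ Δ T.G T.ψ y z ∧ Δ T.G T.ψ y z ⊆ Δ T.G T.ψ w x := by
  obtain ⟨huv, hwx, hvux, hwvx⟩ := h
  have hac := T.acyclic
  have hx_vu : x ∈ side T.G v u := mem_side_of_onPath hac huv.symm hvux.symm
  have hx_zy : x ∈ side T.G z y := mem_side_of_onPath hac hyz.symm hz.symm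
  by_cases hyz_wx : s(y, z) = s(w, x)
  · rcases Sym2.eq_iff.mp hyz_wx with ⟨rfl, rfl⟩ | ⟨rfl, rfl⟩
    · exact ⟨hsub, subset_rfl⟩
    · exact absurd (by simpa using hz.2 .nil) hwx.ne
  by_cases huv_yz : s(u, v) = s(y, z)
  · rcases Sym2.eq_iff.mp huv_yz with ⟨rfl, rfl⟩ | ⟨rfl, rfl⟩
    · exact ⟨subset_rfl, hsub⟩
    · exact ((disjoint_side hac huv).notMem_of_mem_left hx_zy hx_vu).elim
  have hwx_zy : s(w, x) ≠ s(z, y) := fun h => hyz_wx (Sym2.eq_swap.trans h.symm)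
  have hz_uv : z ∉ side T.G u v := fun hz_uv => (disjoint_side hac hyz).notMem_of_mem_left hv
    (mem_side_of_separates hac huv.symm hx_vu hz_uv hx_zy (mem_side_self z y))
  have hy_xw : y ∉ side T.G x w := fun hy_xw => (disjoint_side hac hyz).notMem_of_mem_left
    (mem_side_of_separates hac hwx.symm hy_xw (mem_side_of_onPath hac hwx hwvx)
      (mem_side_self y z) hv) hx_zy
  have hS₁ : side T.G u v ⊆ side T.G y z := side_subset_side huv huv_yz hv hz_uv
  have hS₄ : side T.G x w ⊆ side T.G z y := side_subset_side hwx.symm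
    (fun h => hwx_zy (Sym2.eq_swap.trans h)) (mem_side_of_adj hx_zy hwx hwx_zy) hy_xw
  have hS₂ := side_subset_side_swap hac hyz hS₁
  have hS₃ := side_subset_side_swap hac hyz.symm hS₄
  have hM_zy : Mside T.G T.ψ z y ⊆ Mside T.G T.ψ v u := Mside_subset_Mside_s3 hS₂ hS₁
  have hM_xw : Mside T.G T.ψ x w ⊆ Mside T.G T.ψ z y := Mside_subset_Mside_s3 hS₄ hS₃
  have hne : (Δ T.G T.ψ u v).Nonempty :=
    hall u v huv ⟨hvux.1, fun W => W.start_mem_support⟩ hvux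
  exact ⟨Δ_subset_of_Mside_subset hyz hsub (Mside_subset_Mside_s3 hS₁ hS₂) hM_xw hM_zy,
    Δ_subset_of_Mside_subset_of_nonempty hne hsub (Mside_subset_Mside_s3 hS₃ hS₄) hM_xw hM_zy⟩

/-- If `(u,v)` and `(w,x)` lie on a path `P_{u,x}`, all edges on this
path are informative, and `Δ(u,v) ⊆ Δ(w,x)`, then for every edge `(y,z)` on the
path oriented so that `v` is on the same side of `(y,z)` as `u`,
`Δ(u,v) ⊆ Δ(y,z) ⊆ Δ(w,x)`. -/
theorem stmt3 (T : MulTree V L) (u v w x : V) (h : PathConfig T.G u v w x)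
    (hall : ∀ p q : V, T.G.Adj p q → OnPath T.G p u x → OnPath T.G q p x →
      (Δ T.G T.ψ p q).Nonempty)
    (hsub : Δ T.G T.ψ u v ⊆ Δ T.G T.ψ w x)
    (y z : V) (hyz : T.G.Adj y z) (hy : OnPath T.G y u x) (hz : OnPath T.G z y x)
    (hv : v ∈ side T.G y z) :
    Δ T.G T.ψ u v ⊆ Δ T.G T.ψ y z ∧ Δ T.G T.ψ y z ⊆ Δ T.G T.ψ w x :=
  stmt3_general T u v w x h hall hsub y z hyz hz hv
end

section
/- In a maximally reduced MUL-tree T, every internal edge resolves some quartet that is resolved by no other edge of T. -/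
open SimpleGraph

variable {V V' L L' : Type}

/-
Contracting an internal edge `uv` of a tree leaves every other edge `yz` in place, with the same
leaves on each of its two sides (no leaf is created or destroyed, since both ends of `uv` are
internal and a tree has no triangles), so `yz` resolves the same quartets before and after the
contraction; conversely every edge of the contracted tree comes from an edge of `T`. Hence the
information content of `T/uv` is that of `T` minus the quartets resolved by `uv` alone. As `T` is
maximally reduced, `uv` is not contractible, so such a quartet exists.
-/

namespace SimpleGraph

lemma Reachable.of_forall_adj {W : Type*} {G : SimpleGraph V} {H : SimpleGraph W} (f : V → W)
    (hf : ∀ a b, G.Adj a b → H.Reachable (f a) (f b)) {p q : V} (h : G.Reachable p q) :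
    H.Reachable (f p) (f q) := by
  obtain ⟨w⟩ := h
  induction w with
  | nil => rfl
  | cons hab _ ih => exact (hf _ _ hab).trans ih

lemma IsAcyclic.not_adj_of_adj_of_adj {G : SimpleGraph V} (hG : G.IsAcyclic) {a b c : V}
    (hab : G.Adj a b) (hbc : G.Adj b c) : ¬ G.Adj a c := by
  intro hac
  have h := congrArg (fun p : G.Path a c => p.1.length)
    ((hG.subsingleton_path a c).elim ⟨hac.toWalk, by simp [hac.ne]⟩
      ⟨.cons hab hbc.toWalk, by simp [hab.ne, hbc.ne, hac.ne]⟩)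
  simp at h

end SimpleGraph

section Contraction

variable {G : SimpleGraph V} {ψ : V → L} {u v : V}

open scoped Classical in
noncomputable def contractMap (u v x : V) : V := if x = v then u else x

@[simp] lemma contractMap_self : contractMap u v v = u := if_pos rfl

lemma contractMap_of_ne {x : V} (h : x ≠ v) : contractMap u v x = x := if_neg h

lemma contractMap_ne (huv : u ≠ v) (x : V) : contractMap u v x ≠ v := by
  unfold contractMap; split <;> assumption

lemma eq_or_eq_of_contractMap_eq {x y : V} (h : contractMap u v x = contractMap u v y) :
    x = y ∨ s(x, y) = s(u, v) := by
  unfold contractMap at h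
  split at h <;> split at h <;> simp_all

lemma contractMap_eq_of_eq {x y : V} (h : s(x, y) = s(u, v)) :
    contractMap u v x = contractMap u v y := by
  rcases Sym2.eq_iff.mp h with ⟨rfl, rfl⟩ | ⟨rfl, rfl⟩ <;> simp [contractMap]

lemma reachable_contractMap {H : SimpleGraph V} (h : H.Adj u v) (x : V) :
    H.Reachable (contractMap u v x) x := by
  by_cases hx : x = v
  · subst hx
    rw [contractMap_self]
    exact h.reachable
  · rw [contractMap_of_ne hx]

lemma contractEdge_adj_contractMap (huv : u ≠ v) {a b : V} (hab : G.Adj a b)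
    (hne : s(a, b) ≠ s(u, v)) :
    (contractEdge G u v).Adj (contractMap u v a) (contractMap u v b) := by
  refine ⟨fun h => ?_, contractMap_ne huv a, contractMap_ne huv b, ?_⟩
  · rcases eq_or_eq_of_contractMap_eq h with rfl | h
    exacts [G.loopless.irrefl _ hab, hne h]
  · by_cases hav : a = v
    · subst hav
      rw [contractMap_self, contractMap_of_ne hab.ne']
      exact Or.inr (Or.inl ⟨rfl, hab⟩)
    by_cases hbv : b = v
    · subst hbv
      rw [contractMap_self, contractMap_of_ne hab.ne]
      exact Or.inr (Or.inr ⟨rfl, hab⟩)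
    rw [contractMap_of_ne hav, contractMap_of_ne hbv]
    exact Or.inl hab

lemma exists_adj_of_contractEdge_adj {a b : V} (h : (contractEdge G u v).Adj a b) :
    ∃ a' b', G.Adj a' b' ∧ s(a', b') ≠ s(u, v) ∧
      contractMap u v a' = a ∧ contractMap u v b' = b := by
  obtain ⟨hab, hav, hbv, hG | ⟨rfl, hG⟩ | ⟨rfl, hG⟩⟩ := h
  · exact ⟨a, b, hG, fun h => hbv (by rcases Sym2.eq_iff.mp h with h | h <;> simp_all),
      contractMap_of_ne hav, contractMap_of_ne hbv⟩
  · exact ⟨v, b, hG, fun h => hab (by rcases Sym2.eq_iff.mp h with h | h <;> simp_all),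
      contractMap_self, contractMap_of_ne hbv⟩
  · exact ⟨a, v, hG, fun h => hab (by rcases Sym2.eq_iff.mp h with h | h <;> simp_all),
      contractMap_of_ne hav, contractMap_self⟩

lemma injOn_map_contractMap (hG : G.IsAcyclic) (huv : G.Adj u v) :
    Set.InjOn (Sym2.map (contractMap u v)) (G.edgeSet \ {s(u, v)}) := by
  have triangle := fun {x : V} (hux : G.Adj u x) (hvx : G.Adj v x) =>
    hG.not_adj_of_adj_of_adj hux hvx.symm huv
  have oriented : ∀ {a b y z : V}, G.Adj a b → G.Adj y z → s(a, b) ≠ s(u, v) →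
      contractMap u v a = contractMap u v y → contractMap u v b = contractMap u v z →
      s(a, b) = s(y, z) := by
    intro a b y z hab hyz hab' ha hb
    rcases eq_or_eq_of_contractMap_eq ha with rfl | ha <;>
      rcases eq_or_eq_of_contractMap_eq hb with rfl | hb
    · rfl
    · rcases Sym2.eq_iff.mp hb with ⟨rfl, rfl⟩ | ⟨rfl, rfl⟩
      exacts [(triangle hab.symm hyz.symm).elim, (triangle hyz.symm hab.symm).elim]
    · rcases Sym2.eq_iff.mp ha with ⟨rfl, rfl⟩ | ⟨rfl, rfl⟩
      exacts [(triangle hab hyz).elim, (triangle hyz hab).elim]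
    · rcases Sym2.eq_iff.mp (ha.trans hb.symm) with ⟨rfl, -⟩ | ⟨-, rfl⟩
      exacts [(hab.ne rfl).elim, (hab' ha).elim]
  rintro ⟨a, b⟩ ⟨hab, hab'⟩ ⟨y, z⟩ ⟨hyz, -⟩ h
  rcases Sym2.eq_iff.mp h with ⟨ha, hb⟩ | ⟨ha, hb⟩
  · exact oriented hab hyz hab' ha hb
  · exact (oriented hab hyz.symm hab' ha hb).trans Sym2.eq_swap

lemma deleteEdges_adj_of_ne (huv : G.Adj u v) {y z : V} (hne : s(y, z) ≠ s(u, v)) :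
    (G.deleteEdges {s(y, z)}).Adj u v :=
  (deleteEdges_adj ..).mpr ⟨huv, fun h => hne (Set.mem_singleton_iff.mp h).symm⟩

lemma reachable_deleteEdges_of_reachable_contractEdge (huv : G.Adj u v) {y z : V}
    (hne : s(y, z) ≠ s(u, v)) {p q : V}
    (h : ((contractEdge G u v).deleteEdges {s(contractMap u v y, contractMap u v z)}).Reachable
      p q) :
    (G.deleteEdges {s(y, z)}).Reachable p q := by
  have huv' := deleteEdges_adj_of_ne huv hne
  refine Reachable.of_forall_adj id (fun a b hab => ?_) h
  rw [deleteEdges_adj, Set.mem_singleton_iff] at hab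
  obtain ⟨a, b, hab', -, rfl, rfl⟩ := exists_adj_of_contractEdge_adj hab.1
  have hdel : (G.deleteEdges {s(y, z)}).Adj a b := by
    refine (deleteEdges_adj ..).mpr ⟨hab', fun h => hab.2 ?_⟩
    simpa using congrArg (Sym2.map (contractMap u v)) (Set.mem_singleton_iff.mp h)
  exact (reachable_contractMap huv' a).trans
    (hdel.reachable.trans (reachable_contractMap huv' b).symm)

lemma reachable_contractEdge_of_reachable_deleteEdges (hG : G.IsAcyclic) (huv : G.Adj u v)
    {y z : V} (hyz : G.Adj y z) (hne : s(y, z) ≠ s(u, v)) {p q : V}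
    (h : (G.deleteEdges {s(y, z)}).Reachable p q) :
    ((contractEdge G u v).deleteEdges {s(contractMap u v y, contractMap u v z)}).Reachable
      (contractMap u v p) (contractMap u v q) := by
  refine Reachable.of_forall_adj (contractMap u v) (fun a b hab => ?_) h
  rw [deleteEdges_adj, Set.mem_singleton_iff] at hab
  by_cases hab' : s(a, b) = s(u, v)
  · rw [contractMap_eq_of_eq hab']
  refine Adj.reachable ((deleteEdges_adj ..).mpr
    ⟨contractEdge_adj_contractMap huv.ne hab.1 hab', fun h => hab.2 ?_⟩)
  exact injOn_map_contractMap hG huv ⟨hab.1, hab'⟩ ⟨hyz, hne⟩ (Set.mem_singleton_iff.mp h)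

lemma mem_side_contractEdge_iff (hG : G.IsAcyclic) (huv : G.Adj u v) {y z : V}
    (hyz : G.Adj y z) (hne : s(y, z) ≠ s(u, v)) {w : V} (hw : w ≠ v) :
    w ∈ side (contractEdge G u v) (contractMap u v y) (contractMap u v z) ↔ w ∈ side G y z := by
  refine ⟨fun h => (reachable_deleteEdges_of_reachable_contractEdge huv hne h).trans
    (reachable_contractMap (deleteEdges_adj_of_ne huv hne) y), fun h => ?_⟩
  simpa [side, contractMap_of_ne hw] using
    reachable_contractEdge_of_reachable_deleteEdges hG huv hyz hne h

lemma exists_adj_ne_of_not_isLeaf (hu : ¬ IsLeaf G u) (huv : G.Adj u v) :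
    ∃ p, G.Adj u p ∧ p ≠ v := by
  by_contra! h
  refine hu ?_
  have hN : G.neighborSet u = {v} :=
    Set.eq_singleton_iff_unique_mem.mpr ⟨huv, fun p hp => h p hp⟩
  rw [IsLeaf, deg, hN, Set.ncard_singleton]

lemma contractEdge_neighborSet_of_ne (huv : u ≠ v) {w : V} (hwu : w ≠ u) (hwv : w ≠ v) :
    (contractEdge G u v).neighborSet w = contractMap u v '' G.neighborSet w := by
  ext x
  simp only [mem_neighborSet, Set.mem_image]
  constructor
  · rintro ⟨-, -, hxv, hwx | ⟨hwu', -⟩ | ⟨rfl, hwv'⟩⟩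
    · exact ⟨x, hwx, contractMap_of_ne hxv⟩
    · exact absurd hwu' hwu
    · exact ⟨v, hwv', contractMap_self⟩
  · rintro ⟨x, hwx, rfl⟩
    have hne : s(w, x) ≠ s(u, v) := fun h => by
      rcases Sym2.eq_iff.mp h with ⟨h, -⟩ | ⟨h, -⟩
      exacts [hwu h, hwv h]
    have h := contractEdge_adj_contractMap huv hwx hne
    rwa [contractMap_of_ne hwv] at h

lemma deg_contractEdge_of_ne (hG : G.IsAcyclic) (huv : G.Adj u v) {w : V} (hwu : w ≠ u)
    (hwv : w ≠ v) : deg (contractEdge G u v) w = deg G w := by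
  rw [deg, deg, contractEdge_neighborSet_of_ne huv.ne hwu hwv]
  refine Set.InjOn.ncard_image fun x hx x' hx' h => ?_
  rcases eq_or_eq_of_contractMap_eq h with h | h
  · exact h
  · rcases Sym2.eq_iff.mp h with ⟨rfl, rfl⟩ | ⟨rfl, rfl⟩
    exacts [(hG.not_adj_of_adj_of_adj hx.symm hx' huv).elim,
      (hG.not_adj_of_adj_of_adj hx'.symm hx huv).elim]

lemma isLeaf_contractEdge_iff (hG : G.IsAcyclic) (h : InternalEdge G u v) (w : V) :
    IsLeaf (contractEdge G u v) w ↔ IsLeaf G w := by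
  obtain ⟨huv, hu, hv⟩ := h
  by_cases hwv : w = v
  · subst hwv
    refine iff_of_false (fun h => ?_) hv
    obtain ⟨x, hx⟩ := Set.ncard_eq_one.mp h
    have hmem : x ∈ (contractEdge G u w).neighborSet w := hx ▸ Set.mem_singleton x
    exact hmem.2.1 rfl
  by_cases hwu : w = u
  · subst hwu
    refine iff_of_false (fun h => ?_) hu
    obtain ⟨p, hwp, hpv⟩ := exists_adj_ne_of_not_isLeaf hu huv
    obtain ⟨x, hvx, hxw⟩ := exists_adj_ne_of_not_isLeaf hv huv.symm
    obtain ⟨c, hc⟩ := Set.ncard_eq_one.mp h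
    have hp : p ∈ (contractEdge G w v).neighborSet w := ⟨hwp.ne, huv.ne, hpv, Or.inl hwp⟩
    have hx : x ∈ (contractEdge G w v).neighborSet w :=
      ⟨hxw.symm, huv.ne, hvx.ne', Or.inr (Or.inl ⟨rfl, hvx⟩)⟩
    rw [hc] at hp hx
    exact hG.not_adj_of_adj_of_adj hwp (hp.trans hx.symm ▸ hvx.symm) huv
  rw [IsLeaf, IsLeaf, deg_contractEdge_of_ne hG huv hwu hwv]

lemma sideLabels_contractEdge (hG : G.IsAcyclic) (h : InternalEdge G u v) {y z : V}
    (hyz : G.Adj y z) (hne : s(y, z) ≠ s(u, v)) :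
    sideLabels (contractEdge G u v) ψ (contractMap u v y) (contractMap u v z) =
      sideLabels G ψ y z := by
  ext m
  simp only [sideLabels, isLeaf_contractEdge_iff hG h]
  refine exists_congr fun w => and_congr_right fun hw => and_congr_left' ?_
  exact mem_side_contractEdge_iff hG h.1 hyz hne fun hwv => h.2.2 (hwv ▸ hw)

lemma Resolves.symm {q : Quartet L} (h : Resolves G ψ u v q) : Resolves G ψ v u q := by
  obtain ⟨huv, a, b, c, d, hab, hcd, ha, hb, hc, hd, rfl⟩ := h
  exact ⟨huv.symm, c, d, a, b, hcd, hab, hc, hd, ha, hb, Sym2.eq_swap⟩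

lemma Resolves.of_sideLabels_eq {G' : SimpleGraph V} {y z y' z' : V} {q : Quartet L}
    (h : Resolves G ψ y z q) (hadj : G'.Adj y' z')
    (hy : sideLabels G' ψ y' z' = sideLabels G ψ y z)
    (hz : sideLabels G' ψ z' y' = sideLabels G ψ z y) : Resolves G' ψ y' z' q := by
  have hMy : Mside G' ψ y' z' = Mside G ψ y z := by rw [Mside, Mside, hy, hz]
  have hMz : Mside G' ψ z' y' = Mside G ψ z y := by rw [Mside, Mside, hy, hz]
  obtain ⟨-, a, b, c, d, hab, hcd, h⟩ := h
  refine ⟨hadj, a, b, c, d, hab, hcd, ?_⟩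
  rwa [hMy, hMz]

lemma Resolves.contractEdge (hG : G.IsAcyclic) (h : InternalEdge G u v) {y z : V}
    (hne : s(y, z) ≠ s(u, v)) {q : Quartet L} (hq : Resolves G ψ y z q) :
    Resolves (contractEdge G u v) ψ (contractMap u v y) (contractMap u v z) q :=
  hq.of_sideLabels_eq (contractEdge_adj_contractMap h.1.ne hq.1 hne)
    (sideLabels_contractEdge hG h hq.1 hne)
    (sideLabels_contractEdge hG h hq.1.symm (Sym2.eq_swap.trans_ne hne))

lemma infoContent_contractEdge_subset (hG : G.IsAcyclic) (h : InternalEdge G u v) :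
    infoContent (contractEdge G u v) ψ ⊆ infoContent G ψ := by
  rintro q ⟨a, b, hq⟩
  obtain ⟨y, z, hyz, hne, rfl, rfl⟩ := exists_adj_of_contractEdge_adj hq.1
  exact ⟨y, z, hq.of_sideLabels_eq hyz (sideLabels_contractEdge hG h hyz hne).symm
    (sideLabels_contractEdge hG h hyz.symm (Sym2.eq_swap.trans_ne hne)).symm⟩

end Contraction

/-- In a maximally reduced MUL-tree, every internal edge resolves
some quartet that is resolved by no other edge. -/
theorem stmt4 (T : MulTree V L) (hmr : MaximallyReduced T.G T.ψ)
    (u v : V) (h : InternalEdge T.G u v) :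
    ∃ q ∈ Δ T.G T.ψ u v, ∀ y z : V, Resolves T.G T.ψ y z q → s(y, z) = s(u, v) := by
  obtain ⟨q, ⟨y, z, hq⟩, hq_contract⟩ :
      ∃ q ∈ infoContent T.G T.ψ, q ∉ infoContent (contractEdge T.G u v) T.ψ := by
    by_contra! hsub
    exact hmr.2 u v ⟨h, (infoContent_contractEdge_subset T.acyclic h).antisymm hsub⟩
  have hunique : ∀ y z, Resolves T.G T.ψ y z q → s(y, z) = s(u, v) := fun y z hr => by
    by_contra hne
    exact hq_contract ⟨_, _, hr.contractEdge T.acyclic h hne⟩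
  refine ⟨q, ?_, hunique⟩
  rcases Sym2.eq_iff.mp (hunique y z hq) with ⟨rfl, rfl⟩ | ⟨rfl, rfl⟩
  exacts [hq, hq.symm]
end

section
/- Let ℓ be a label of a MUL-tree (T, M, ψ) such that no quartet in the information content I(T) involves ℓ. Then the tree obtained from T by deleting all leaves labeled ℓ (suppressing any resulting degree-2 nodes) has the same information content as T. -/
open SimpleGraph

variable {V V' L L' : Type}

/-!
Deleting an `ℓ`-leaf `v₀` with neighbour `u` is done in two moves: cut the pendant edge `uv₀`;
then, if `u` is left with degree two, suppress `u`. Cutting the edge only removes the label `ℓ`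
from the sides of the other edges (and the pendant edge itself resolves nothing), so quartets
not involving `ℓ` are resolved exactly as before. Suppressing a degree-two vertex `u` with
neighbours `p`, `q` merges the edges `up` and `uq` into the edge `pq`, whose sides carry the same
labels, so the information content does not change at all. Both moves keep the graph acyclic
and free of degree-two vertices, so the argument iterates. Finally no quartet of either tree
involves `ℓ`: for `T` by hypothesis, and for `H` because it has no leaf labelled `ℓ`.
-/

namespace SimpleGraph

variable {G : SimpleGraph V} {u v₀ p q : V}

theorem Reachable.lift {G' : SimpleGraph V'} (f : V → V')
    (hf : ∀ a b, G.Adj a b → G'.Reachable (f a) (f b)) {x y : V} (h : G.Reachable x y) :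
    G'.Reachable (f x) (f y) := by
  rw [reachable_iff_reflTransGen] at h ⊢
  exact Relation.ReflTransGen.lift' f (fun a b hab => (reachable_iff_reflTransGen _ _).mp
    (hf a b hab)) _ _ h

theorem Reachable.eq_of_neighborSet_eq_empty {x y : V} (h : G.Reachable x y)
    (hx : G.neighborSet x = ∅) : x = y := by
  obtain ⟨_ | ⟨hadj, _⟩⟩ := h
  · rfl
  · have hmem : _ ∈ G.neighborSet x := hadj
    simp [hx] at hmem

theorem eq_of_adj_of_neighborSet_eq_singleton (hv : G.neighborSet v₀ = {u}) {b : V}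
    (h : G.Adj v₀ b) : b = u := by
  rw [← Set.mem_singleton_iff, ← hv]
  exact h

theorem adj_of_neighborSet_eq_singleton (hv : G.neighborSet v₀ = {u}) : G.Adj v₀ u := by
  rw [← mem_neighborSet, hv]
  rfl

theorem adj_iff_of_neighborSet_eq_pair (hu : G.neighborSet u = {p, q}) {b : V} :
    G.Adj u b ↔ b = p ∨ b = q := by
  rw [← mem_neighborSet, hu]
  rfl

theorem IsAcyclic.not_reachable_deleteEdges (hG : G.IsAcyclic) (hup : G.Adj u p)
    (huq : G.Adj u q) (hpq : p ≠ q) :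
    ¬ (G.deleteEdges {s(u, p)}).Reachable p q := by
  intro h
  have hbridge := isBridge_iff.mp (isAcyclic_iff_forall_adj_isBridge.mp hG hup)
  have huq' : (G.deleteEdges {s(u, p)}).Adj u q := by
    refine deleteEdges_adj.mpr ⟨huq, ?_⟩
    rw [Set.mem_singleton_iff, Sym2.congr_right]
    exact hpq.symm
  exact hbridge (huq'.reachable.trans h.symm)

theorem IsAcyclic.not_adj_of_neighborSet_eq_pair (hG : G.IsAcyclic)
    (hu : G.neighborSet u = {p, q}) (hpq : p ≠ q) :
    ¬ G.Adj p q := by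
  have huq := (adj_iff_of_neighborSet_eq_pair hu).mpr (Or.inr rfl)
  refine fun h => hG.not_reachable_deleteEdges ((adj_iff_of_neighborSet_eq_pair hu).mpr
    (Or.inl rfl)) huq hpq (Adj.reachable ?_)
  simp only [deleteEdges_adj, Set.mem_singleton_iff, Sym2.eq_iff]
  exact ⟨h, by grind [huq.ne]⟩

end SimpleGraph

section Sides

variable {G G' : SimpleGraph V} {ψ : V → L}

theorem mem_side_iff_of_lift (f : V → V) {x y x' y' w : V}
    (hf : ∀ a b, (G.deleteEdges {s(x, y)}).Adj a b →
      (G'.deleteEdges {s(x', y')}).Reachable (f a) (f b))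
    (hback : ∀ a b, (G'.deleteEdges {s(x', y')}).Adj a b →
      (G.deleteEdges {s(x, y)}).Reachable a b)
    (hfx : f x = x') (hx' : (G.deleteEdges {s(x, y)}).Reachable x' x) (hfw : f w = w) :
    w ∈ side G' x' y' ↔ w ∈ side G x y := by
  refine ⟨fun h => (h.lift id hback).trans hx', fun h => ?_⟩
  have h' := h.lift f hf
  rwa [hfw, hfx] at h'

theorem resolves_of_sideLabels_iff {x y x' y' : V} {Q : Quartet L} (hadj : G'.Adj x' y')
    (hxy : ∀ m, (∃ pr ∈ Q, m ∈ pr) → (m ∈ sideLabels G ψ x y ↔ m ∈ sideLabels G' ψ x' y'))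
    (hyx : ∀ m, (∃ pr ∈ Q, m ∈ pr) → (m ∈ sideLabels G ψ y x ↔ m ∈ sideLabels G' ψ y' x'))
    (h : Resolves G ψ x y Q) : Resolves G' ψ x' y' Q := by
  obtain ⟨-, a, b, c, d, hab, hcd, ha, hb, hc, hd, rfl⟩ := h
  have transfer : ∀ m, (∃ pr ∈ s(s(a, b), s(c, d)), m ∈ pr) → m ∈ Mside G ψ x y →
      m ∈ Mside G' ψ x' y' := fun m hm h =>
    ⟨(hxy m hm).mp h.1, fun h' => h.2 ((hyx m hm).mpr h')⟩
  have transfer' : ∀ m, (∃ pr ∈ s(s(a, b), s(c, d)), m ∈ pr) → m ∈ Mside G ψ y x →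
      m ∈ Mside G' ψ y' x' := fun m hm h =>
    ⟨(hyx m hm).mp h.1, fun h' => h.2 ((hxy m hm).mpr h')⟩
  exact ⟨hadj, a, b, c, d, hab, hcd, transfer a ⟨_, Sym2.mem_mk_left _ _, Sym2.mem_mk_left _ _⟩ ha,
    transfer b ⟨_, Sym2.mem_mk_left _ _, Sym2.mem_mk_right _ _⟩ hb,
    transfer' c ⟨_, Sym2.mem_mk_right _ _, Sym2.mem_mk_left _ _⟩ hc,
    transfer' d ⟨_, Sym2.mem_mk_right _ _, Sym2.mem_mk_right _ _⟩ hd, rfl⟩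

end Sides

section PendantEdge

variable {G : SimpleGraph V} {ψ : V → L} {ℓ : L} {u v₀ : V}

theorem neighborSet_eq_singleton_of_isLeaf {w v : V} (hw : IsLeaf G w) (hv : G.Adj w v) :
    G.neighborSet w = {v} := by
  obtain ⟨a, ha⟩ := Set.ncard_eq_one.mp hw
  have hva : v ∈ G.neighborSet w := hv
  rw [ha] at hva ⊢
  rw [hva]

theorem neighborSet_deleteEdges_pendant_self (hv : G.neighborSet v₀ = {u}) :
    (G.deleteEdges {s(u, v₀)}).neighborSet v₀ = ∅ := by
  ext b
  simp only [mem_neighborSet, deleteEdges_adj, Set.mem_singleton_iff, Set.mem_empty_iff_false,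
    iff_false, not_and, not_not]
  intro h
  rw [eq_of_adj_of_neighborSet_eq_singleton hv h, Sym2.eq_swap]

theorem neighborSet_deleteEdges_pendant (hv : G.neighborSet v₀ = {u}) {w : V} (hw : w ≠ v₀) :
    (G.deleteEdges {s(u, v₀)}).neighborSet w = G.neighborSet w \ {v₀} := by
  ext b
  have hwu : G.Adj w v₀ → w = u := fun h => eq_of_adj_of_neighborSet_eq_singleton hv h.symm
  simp only [mem_neighborSet, deleteEdges_adj, Set.mem_singleton_iff, Set.mem_sdiff, Sym2.eq_iff]
  grind

theorem sideLabels_pendant_subset (hv : G.neighborSet v₀ = {u}) :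
    sideLabels G ψ v₀ u ⊆ {ψ v₀} := by
  rintro _ ⟨w, -, hw, rfl⟩
  have hiso : (G.deleteEdges {s(v₀, u)}).neighborSet v₀ = ∅ := by
    rw [Sym2.eq_swap]; exact neighborSet_deleteEdges_pendant_self hv
  rw [(hw.symm.eq_of_neighborSet_eq_empty hiso).symm]
  rfl

theorem not_resolves_pendant (hv : G.neighborSet v₀ = {u}) {x y : V}
    (hxy : s(x, y) = s(u, v₀)) (Q : Quartet L) : ¬ Resolves G ψ x y Q := by
  rintro ⟨-, a, b, c, d, hab, hcd, ha, hb, hc, hd, -⟩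
  rcases Sym2.eq_iff.mp hxy with ⟨rfl, rfl⟩ | ⟨rfl, rfl⟩
  · exact hcd ((sideLabels_pendant_subset hv hc.1).trans (sideLabels_pendant_subset hv hd.1).symm)
  · exact hab ((sideLabels_pendant_subset hv ha.1).trans (sideLabels_pendant_subset hv hb.1).symm)

theorem deg_deleteEdges_pendant_self (hv : G.neighborSet v₀ = {u}) :
    deg (G.deleteEdges {s(u, v₀)}) v₀ = 0 := by
  rw [deg, neighborSet_deleteEdges_pendant_self hv, Set.ncard_empty]

theorem deg_deleteEdges_pendant_center (hv : G.neighborSet v₀ = {u}) :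
    deg (G.deleteEdges {s(u, v₀)}) u = deg G u - 1 := by
  have hu : v₀ ∈ G.neighborSet u := (adj_of_neighborSet_eq_singleton hv).symm
  rw [deg, neighborSet_deleteEdges_pendant hv (G.ne_of_adj hu), Set.ncard_sdiff_singleton_of_mem hu]
  rfl

theorem deg_deleteEdges_pendant_of_ne (hv : G.neighborSet v₀ = {u}) {w : V} (hwu : w ≠ u)
    (hwv : w ≠ v₀) : deg (G.deleteEdges {s(u, v₀)}) w = deg G w := by
  have hv₀ : v₀ ∉ G.neighborSet w := fun h =>
    hwu (eq_of_adj_of_neighborSet_eq_singleton hv (G.adj_symm h))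
  rw [deg, neighborSet_deleteEdges_pendant hv hwv, Set.sdiff_singleton_eq_self hv₀]
  rfl

theorem isLeaf_deleteEdges_pendant_iff (hv : G.neighborSet v₀ = {u}) (hu : deg G u ≠ 2)
    {w : V} : IsLeaf (G.deleteEdges {s(u, v₀)}) w ↔ IsLeaf G w ∧ w ≠ u ∧ w ≠ v₀ := by
  unfold IsLeaf
  by_cases hwv : w = v₀
  · simp [hwv, deg_deleteEdges_pendant_self hv]
  by_cases hwu : w = u
  · subst hwu
    rw [deg_deleteEdges_pendant_center hv]
    grind
  · rw [deg_deleteEdges_pendant_of_ne hv hwu hwv]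
    tauto

theorem mem_side_deleteEdges_pendant_iff (hv : G.neighborSet v₀ = {u}) {x y w : V}
    (hxy : G.Adj x y) (hne : s(x, y) ≠ s(u, v₀)) (hw : w ≠ v₀) :
    w ∈ side (G.deleteEdges {s(u, v₀)}) x y ↔ w ∈ side G x y := by
  classical
  have hv₀ : ∀ b, G.Adj v₀ b → b = u := fun b => eq_of_adj_of_neighborSet_eq_singleton hv
  have hx : x ≠ v₀ := by
    rintro rfl
    exact hne (by rw [hv₀ y hxy, Sym2.eq_swap])
  have huv : u ≠ v₀ := (adj_of_neighborSet_eq_singleton hv).ne'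
  refine mem_side_iff_of_lift (fun z => if z = v₀ then u else z) (fun a b hab => ?_)
    (fun a b hab => ?_) (if_neg hx) Reachable.rfl (if_neg hw)
  · simp only [deleteEdges_adj, Set.mem_singleton_iff] at hab
    by_cases ha : a = v₀
    · subst ha; simp [hv₀ b hab.1, huv]
    by_cases hb : b = v₀
    · subst hb; simp [hv₀ a hab.1.symm, huv]
    simp only [if_neg ha, if_neg hb]
    refine Adj.reachable ?_
    simp only [deleteEdges_adj, Set.mem_singleton_iff, Sym2.eq_iff] at hab ⊢
    grind
  · simp only [deleteEdges_adj, Set.mem_singleton_iff] at hab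
    exact Adj.reachable (deleteEdges_adj.mpr ⟨hab.1.1, hab.2⟩)

theorem mem_sideLabels_deleteEdges_pendant_iff (hv : G.neighborSet v₀ = {u}) (hψ : ψ v₀ = ℓ)
    (hu : deg G u ≠ 2) {x y : V} (hxy : G.Adj x y) (hne : s(x, y) ≠ s(u, v₀)) {m : L}
    (hm : m ≠ ℓ) : m ∈ sideLabels (G.deleteEdges {s(u, v₀)}) ψ x y ↔ m ∈ sideLabels G ψ x y := by
  constructor
  · rintro ⟨w, hleaf, hside, rfl⟩
    obtain ⟨hleaf, -, hwv⟩ := (isLeaf_deleteEdges_pendant_iff hv hu).mp hleaf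
    exact ⟨w, hleaf, (mem_side_deleteEdges_pendant_iff hv hxy hne hwv).mp hside, rfl⟩
  · rintro ⟨w, hleaf, hside, rfl⟩
    have hwv : w ≠ v₀ := by rintro rfl; exact hm hψ
    have hside' := (mem_side_deleteEdges_pendant_iff hv hxy hne hwv).mpr hside
    have hwu : w ≠ u := by
      rintro rfl
      -- a leaf `u` next to the pendant vertex `v₀` is isolated once `v₀` is cut off
      have hNw : G.neighborSet w = {v₀} :=
        neighborSet_eq_singleton_of_isLeaf hleaf (adj_of_neighborSet_eq_singleton hv).symm
      have hiso : (G.deleteEdges {s(w, v₀)}).neighborSet w = ∅ := by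
        rw [neighborSet_deleteEdges_pendant hv hwv, hNw, Set.sdiff_self]
      obtain rfl := (hside'.mono (deleteEdges_le _)).eq_of_neighborSet_eq_empty hiso
      exact hne (by rw [eq_of_adj_of_neighborSet_eq_singleton hNw hxy])
    exact ⟨w, (isLeaf_deleteEdges_pendant_iff hv hu).mpr ⟨hleaf, hwu, hwv⟩, hside', rfl⟩

theorem mem_infoContent_deleteEdges_pendant_iff (hv : G.neighborSet v₀ = {u}) (hψ : ψ v₀ = ℓ)
    (hu : deg G u ≠ 2) {Q : Quartet L} (hQ : ∀ pr ∈ Q, ℓ ∉ pr) :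
    Q ∈ infoContent (G.deleteEdges {s(u, v₀)}) ψ ↔ Q ∈ infoContent G ψ := by
  have hlabels : ∀ m, (∃ pr ∈ Q, m ∈ pr) → m ≠ ℓ := by
    rintro m ⟨pr, hpr, hm⟩ rfl
    exact hQ pr hpr hm
  have hsides : ∀ {x y}, G.Adj x y → s(x, y) ≠ s(u, v₀) → ∀ m, (∃ pr ∈ Q, m ∈ pr) →
      (m ∈ sideLabels (G.deleteEdges {s(u, v₀)}) ψ x y ↔ m ∈ sideLabels G ψ x y) :=
    fun hxy hne m hm => mem_sideLabels_deleteEdges_pendant_iff hv hψ hu hxy hne (hlabels m hm)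
  constructor
  · rintro ⟨x, y, hres⟩
    obtain ⟨hxy, hne⟩ := deleteEdges_adj.mp hres.1
    rw [Set.mem_singleton_iff] at hne
    have hne' : s(y, x) ≠ s(u, v₀) := by rwa [Sym2.eq_swap]
    exact ⟨x, y, resolves_of_sideLabels_iff hxy (hsides hxy hne) (hsides hxy.symm hne') hres⟩
  · rintro ⟨x, y, hres⟩
    by_cases hne : s(x, y) = s(u, v₀)
    · exact absurd hres (not_resolves_pendant hv hne Q)
    have hne' : s(y, x) ≠ s(u, v₀) := by rwa [Sym2.eq_swap]
    exact ⟨x, y, resolves_of_sideLabels_iff (deleteEdges_adj.mpr ⟨hres.1, hne⟩)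
      (fun m hm => (hsides hres.1 hne m hm).symm)
      (fun m hm => (hsides hres.1.symm hne' m hm).symm) hres⟩

end PendantEdge

def suppress (G : SimpleGraph V) (u p q : V) : SimpleGraph V :=
  G.deleteEdges {s(u, p), s(u, q)} ⊔ edge p q

section Suppress

variable {G : SimpleGraph V} {ψ : V → L} {u p q : V}

theorem suppress_comm : suppress G u p q = suppress G u q p := by
  rw [suppress, suppress, Set.pair_comm, edge_comm]

theorem suppress_adj (hu : G.neighborSet u = {p, q}) (hpq : p ≠ q) {a b : V} :
    (suppress G u p q).Adj a b ↔ G.Adj a b ∧ a ≠ u ∧ b ≠ u ∨ (a = p ∧ b = q ∨ a = q ∧ b = p) := by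
  have hu' := fun b => adj_iff_of_neighborSet_eq_pair hu (b := b)
  have hsymm := fun a b => G.adj_comm a b
  simp only [suppress, sup_adj, deleteEdges_adj, edge_adj, Set.mem_insert_iff,
    Set.mem_singleton_iff, Sym2.eq_iff]
  grind

theorem neighborSet_suppress_self (hu : G.neighborSet u = {p, q}) (hpq : p ≠ q) :
    (suppress G u p q).neighborSet u = ∅ := by
  have hup := G.ne_of_adj ((adj_iff_of_neighborSet_eq_pair hu).mpr (Or.inl rfl))
  have huq := G.ne_of_adj ((adj_iff_of_neighborSet_eq_pair hu).mpr (Or.inr rfl))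
  ext b
  simp only [mem_neighborSet, suppress_adj hu hpq, Set.mem_empty_iff_false, iff_false]
  grind

theorem neighborSet_suppress_left (hu : G.neighborSet u = {p, q}) (hpq : p ≠ q) :
    (suppress G u p q).neighborSet p = insert q (G.neighborSet p \ {u}) := by
  have hu' := fun b => adj_iff_of_neighborSet_eq_pair hu (b := b)
  ext b
  simp only [mem_neighborSet, suppress_adj hu hpq, Set.mem_insert_iff, Set.mem_sdiff,
    Set.mem_singleton_iff]
  grind

theorem deg_suppress_left (hu : G.neighborSet u = {p, q}) (hpq : p ≠ q) (hnadj : ¬ G.Adj p q) :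
    deg (suppress G u p q) p = deg G p := by
  rw [deg, neighborSet_suppress_left hu hpq]
  exact Set.ncard_exchange (s := G.neighborSet p) hnadj
    ((adj_iff_of_neighborSet_eq_pair hu).mpr (Or.inl rfl)).symm

theorem deg_suppress_of_ne (hu : G.neighborSet u = {p, q}) (hpq : p ≠ q)
    (hnadj : ¬ G.Adj p q) {w : V} (hw : w ≠ u) : deg (suppress G u p q) w = deg G w := by
  by_cases hwp : w = p
  · rw [hwp, deg_suppress_left hu hpq hnadj]
  by_cases hwq : w = q
  · rw [hwq, suppress_comm, deg_suppress_left (Set.pair_comm p q ▸ hu) hpq.symm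
      (fun h => hnadj h.symm)]
  have hu' := fun b => adj_iff_of_neighborSet_eq_pair hu (b := b)
  have hsymm := fun a b => G.adj_comm a b
  unfold deg
  congr 1
  ext b
  simp only [mem_neighborSet, suppress_adj hu hpq]
  grind

theorem isLeaf_suppress_iff (hu : G.neighborSet u = {p, q}) (hpq : p ≠ q)
    (hnadj : ¬ G.Adj p q) {w : V} : IsLeaf (suppress G u p q) w ↔ IsLeaf G w := by
  unfold IsLeaf
  by_cases hw : w = u
  · subst hw
    rw [deg, deg, neighborSet_suppress_self hu hpq, hu, Set.ncard_empty, Set.ncard_pair hpq]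
    simp
  · rw [deg_suppress_of_ne hu hpq hnadj hw]

section Update

/- `Function.update id u q` contracts `u` onto `q`: it sends every edge except `uq` to an edge of
`suppress G u p q` whose sides carry the same labels. -/

variable [DecidableEq V]

theorem mem_side_suppress_iff (hu : G.neighborSet u = {p, q}) (hpq : p ≠ q)
    (hnadj : ¬ G.Adj p q) {x y w : V} (hxy : G.Adj x y) (hne : s(x, y) ≠ s(u, q))
    (hw : w ≠ u) :
    w ∈ side (suppress G u p q) (Function.update id u q x) (Function.update id u q y) ↔
      w ∈ side G x y := by
  have hu' := fun b => adj_iff_of_neighborSet_eq_pair hu (b := b)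
  have hsymm := fun a b => G.adj_comm a b
  refine mem_side_iff_of_lift (Function.update id u q) (fun a b hab => ?_) (fun a b hab => ?_)
    rfl ?_ (by simp [hw])
  · rw [deleteEdges_adj, Set.mem_singleton_iff] at hab
    by_cases hab' : s(a, b) = s(u, q)
    · rcases Sym2.eq_iff.mp hab' with ⟨rfl, rfl⟩ | ⟨rfl, rfl⟩ <;> simp [hab.1.ne, hab.1.ne']
    refine Adj.reachable ?_
    simp only [deleteEdges_adj, suppress_adj hu hpq, Set.mem_singleton_iff, Sym2.eq_iff,
      Function.update_apply, id] at hab hab' hne ⊢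
    grind
  · simp only [deleteEdges_adj, suppress_adj hu hpq, Set.mem_singleton_iff, Sym2.eq_iff,
      Function.update_apply, id] at hab
    by_cases hpq' : s(a, b) = s(p, q)
    · have hup : (G.deleteEdges {s(x, y)}).Adj p u := by
        simp only [deleteEdges_adj, Set.mem_singleton_iff, Sym2.eq_iff] at hne ⊢
        grind
      have huq : (G.deleteEdges {s(x, y)}).Adj u q := by
        simp only [deleteEdges_adj, Set.mem_singleton_iff, Sym2.eq_iff] at hne ⊢
        grind
      rcases Sym2.eq_iff.mp hpq' with ⟨rfl, rfl⟩ | ⟨rfl, rfl⟩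
      · exact hup.reachable.trans huq.reachable
      · exact (hup.reachable.trans huq.reachable).symm
    refine Adj.reachable ?_
    simp only [deleteEdges_adj, Set.mem_singleton_iff, Sym2.eq_iff] at hpq' hne ⊢
    grind
  · by_cases hx : x = u
    · subst hx
      refine Adj.reachable ?_
      simp only [deleteEdges_adj, Set.mem_singleton_iff, Function.update_self]
      exact ⟨(hu' q).mpr (Or.inr rfl) |>.symm, by rw [Sym2.eq_swap]; exact Ne.symm hne⟩
    · simp [hx]

theorem suppress_adj_update (hu : G.neighborSet u = {p, q}) (hpq : p ≠ q) {x y : V}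
    (hxy : G.Adj x y) (hne : s(x, y) ≠ s(u, q)) :
    (suppress G u p q).Adj (Function.update id u q x) (Function.update id u q y) := by
  have hu' := fun b => adj_iff_of_neighborSet_eq_pair hu (b := b)
  have hsymm := fun a b => G.adj_comm a b
  have hirr := G.loopless.irrefl
  simp only [suppress_adj hu hpq, Function.update_apply, id, ne_eq, Sym2.eq_iff] at hne ⊢
  grind

theorem exists_eq_update_of_suppress_adj (hu : G.neighborSet u = {p, q}) (hpq : p ≠ q)
    {x' y' : V} (h : (suppress G u p q).Adj x' y') :
    ∃ x y, G.Adj x y ∧ s(x, y) ≠ s(u, q) ∧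
      Function.update id u q x = x' ∧ Function.update id u q y = y' := by
  have hup := (adj_iff_of_neighborSet_eq_pair hu).mpr (Or.inl rfl)
  rcases (suppress_adj hu hpq).mp h with ⟨hxy, hx, hy⟩ | ⟨rfl, rfl⟩ | ⟨rfl, rfl⟩
  · exact ⟨x', y', hxy, fun h => hx (Sym2.eq_iff.mp h |>.elim (·.1) fun h' => absurd h'.2 hy),
      by simp [hx], by simp [hy]⟩
  · refine ⟨x', u, hup.symm, ?_, by simp [hup.ne'], by simp⟩
    rw [Sym2.eq_swap, Ne, Sym2.congr_right]
    exact hpq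
  · exact ⟨u, y', hup, by rw [Ne, Sym2.congr_right]; exact hpq, by simp, by simp [hup.ne']⟩

theorem sideLabels_suppress (hu : G.neighborSet u = {p, q}) (hpq : p ≠ q) (hnadj : ¬ G.Adj p q)
    {x y : V} (hxy : G.Adj x y) (hne : s(x, y) ≠ s(u, q)) :
    sideLabels (suppress G u p q) ψ (Function.update id u q x) (Function.update id u q y) =
      sideLabels G ψ x y := by
  have hleaf : ∀ {w}, IsLeaf G w → w ≠ u := by
    rintro w hw rfl
    rw [IsLeaf, deg, hu, Set.ncard_pair hpq] at hw
    exact absurd hw (by norm_num)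
  ext m
  constructor
  · rintro ⟨w, hw, hside, rfl⟩
    rw [isLeaf_suppress_iff hu hpq hnadj] at hw
    exact ⟨w, hw, (mem_side_suppress_iff hu hpq hnadj hxy hne (hleaf hw)).mp hside, rfl⟩
  · rintro ⟨w, hw, hside, rfl⟩
    exact ⟨w, (isLeaf_suppress_iff hu hpq hnadj).mpr hw,
      (mem_side_suppress_iff hu hpq hnadj hxy hne (hleaf hw)).mpr hside, rfl⟩

theorem resolves_suppress_iff (hu : G.neighborSet u = {p, q}) (hpq : p ≠ q) (hnadj : ¬ G.Adj p q)
    {x y : V} (hxy : G.Adj x y) (hne : s(x, y) ≠ s(u, q)) {Q : Quartet L} :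
    Resolves (suppress G u p q) ψ (Function.update id u q x) (Function.update id u q y) Q ↔
      Resolves G ψ x y Q := by
  have hne' : s(y, x) ≠ s(u, q) := by rwa [Sym2.eq_swap]
  have hxy_labels := sideLabels_suppress (ψ := ψ) hu hpq hnadj hxy hne
  have hyx_labels := sideLabels_suppress (ψ := ψ) hu hpq hnadj hxy.symm hne'
  constructor
  · exact resolves_of_sideLabels_iff hxy (by simp [hxy_labels]) (by simp [hyx_labels])
  · exact resolves_of_sideLabels_iff (suppress_adj_update hu hpq hxy hne)
      (by simp [hxy_labels]) (by simp [hyx_labels])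

end Update

theorem infoContent_suppress (hu : G.neighborSet u = {p, q}) (hpq : p ≠ q)
    (hnadj : ¬ G.Adj p q) : infoContent (suppress G u p q) ψ = infoContent G ψ := by
  classical
  ext Q
  constructor
  · rintro ⟨x', y', hres⟩
    obtain ⟨x, y, hxy, hne, rfl, rfl⟩ := exists_eq_update_of_suppress_adj hu hpq hres.1
    exact ⟨x, y, (resolves_suppress_iff hu hpq hnadj hxy hne).mp hres⟩
  · rintro ⟨x, y, hres⟩
    by_cases hne : s(x, y) = s(u, q)
    · have hne' : s(x, y) ≠ s(u, p) := by
        rw [hne, Ne, Sym2.congr_right]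
        exact hpq.symm
      rw [suppress_comm]
      exact ⟨_, _, (resolves_suppress_iff (Set.pair_comm p q ▸ hu) hpq.symm
        (fun h => hnadj h.symm) hres.1 hne').mpr hres⟩
    · exact ⟨_, _, (resolves_suppress_iff hu hpq hnadj hres.1 hne).mpr hres⟩

theorem SimpleGraph.IsAcyclic.suppress (hG : G.IsAcyclic)
    (hu : G.neighborSet u = {p, q}) (hpq : p ≠ q) : (suppress G u p q).IsAcyclic := by
  have hup := (adj_iff_of_neighborSet_eq_pair hu).mpr (Or.inl rfl)
  have huq := (adj_iff_of_neighborSet_eq_pair hu).mpr (Or.inr rfl)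
  refine (hG.anti (deleteEdges_le _)).sup_edge_of_not_reachable fun h =>
    hG.not_reachable_deleteEdges hup huq hpq (h.mono (deleteEdges_anti ?_))
  simp

end Suppress

section PruneLabelStep

variable {G G' : SimpleGraph V} {ψ : V → L} {ℓ : L}

theorem neighborSet_deleteEdges_pendant_center {u v₀ p q : V} (hv : G.neighborSet v₀ = {u})
    (hu : G.neighborSet u = {v₀, p, q}) (hp : p ≠ v₀) (hq : q ≠ v₀) :
    (G.deleteEdges {s(u, v₀)}).neighborSet u = {p, q} := by
  rw [neighborSet_deleteEdges_pendant hv (adj_of_neighborSet_eq_singleton hv).ne', hu]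
  ext b
  simp only [Set.mem_sdiff, Set.mem_insert_iff, Set.mem_singleton_iff]
  grind

theorem deleteEdges_sup_eq_suppress (u v₀ p q : V) :
    G.deleteEdges {s(u, v₀), s(u, p), s(u, q)} ⊔ fromEdgeSet {s(p, q)} =
      suppress (G.deleteEdges {s(u, v₀)}) u p q := by
  rw [suppress, deleteEdges_deleteEdges, Set.singleton_union]
  rfl

theorem PruneLabelStep.isAcyclic (h : PruneLabelStep ψ ℓ G G') (hG : G.IsAcyclic) :
    G'.IsAcyclic := by
  obtain ⟨v₀, -, -, u, hv, ⟨-, rfl⟩ | ⟨-, p, q, hpq, hp, hq, hu, rfl⟩⟩ := h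
  · exact hG.anti (deleteEdges_le _)
  · rw [deleteEdges_sup_eq_suppress]
    exact (hG.anti (deleteEdges_le _)).suppress
      (neighborSet_deleteEdges_pendant_center hv hu hp hq) hpq

theorem PruneLabelStep.deg_ne_two (h : PruneLabelStep ψ ℓ G G') (hG : G.IsAcyclic)
    (hdeg : ∀ v, deg G v ≠ 2) (w : V) : deg G' w ≠ 2 := by
  obtain ⟨v₀, -, -, u, hv, ⟨hu3, rfl⟩ | ⟨-, p, q, hpq, hp, hq, hu, rfl⟩⟩ := h
  all_goals
    have hdeg₁ : ∀ w ≠ u, deg (G.deleteEdges {s(u, v₀)}) w ≠ 2 := fun w hwu => by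
      by_cases hwv : w = v₀
      · rw [hwv, deg_deleteEdges_pendant_self hv]
        norm_num
      · rw [deg_deleteEdges_pendant_of_ne hv hwu hwv]
        exact hdeg w
  · by_cases hwu : w = u
    · rw [hwu, deg_deleteEdges_pendant_center hv]
      omega
    · exact hdeg₁ w hwu
  · have hu₁ := neighborSet_deleteEdges_pendant_center hv hu hp hq
    rw [deleteEdges_sup_eq_suppress]
    by_cases hwu : w = u
    · rw [hwu, deg, neighborSet_suppress_self hu₁ hpq, Set.ncard_empty]
      norm_num
    · rw [deg_suppress_of_ne hu₁ hpq
        ((hG.anti (deleteEdges_le _)).not_adj_of_neighborSet_eq_pair hu₁ hpq) hwu]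
      exact hdeg₁ w hwu

theorem PruneLabelStep.mem_infoContent_iff (h : PruneLabelStep ψ ℓ G G') (hG : G.IsAcyclic)
    (hdeg : ∀ v, deg G v ≠ 2) {Q : Quartet L} (hQ : ∀ pr ∈ Q, ℓ ∉ pr) :
    Q ∈ infoContent G' ψ ↔ Q ∈ infoContent G ψ := by
  obtain ⟨v₀, -, hψ, u, hv, ⟨-, rfl⟩ | ⟨-, p, q, hpq, hp, hq, hu, rfl⟩⟩ := h
  · exact mem_infoContent_deleteEdges_pendant_iff hv hψ (hdeg u) hQ
  · have hu₁ := neighborSet_deleteEdges_pendant_center hv hu hp hq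
    rw [deleteEdges_sup_eq_suppress, infoContent_suppress hu₁ hpq
      ((hG.anti (deleteEdges_le _)).not_adj_of_neighborSet_eq_pair hu₁ hpq)]
    exact mem_infoContent_deleteEdges_pendant_iff hv hψ (hdeg u) hQ

theorem mem_infoContent_iff_of_pruneLabelSteps {H : SimpleGraph V}
    (h : Relation.ReflTransGen (PruneLabelStep ψ ℓ) G H) (hG : G.IsAcyclic)
    (hdeg : ∀ v, deg G v ≠ 2) {Q : Quartet L} (hQ : ∀ pr ∈ Q, ℓ ∉ pr) :
    Q ∈ infoContent H ψ ↔ Q ∈ infoContent G ψ := by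
  induction h using Relation.ReflTransGen.head_induction_on with
  | refl => rfl
  | head hstep _ ih =>
    exact (ih (hstep.isAcyclic hG) (hstep.deg_ne_two hG hdeg)).trans
      (hstep.mem_infoContent_iff hG hdeg hQ)

theorem notMem_of_mem_infoContent (hℓ : ∀ v, IsLeaf G v → ψ v ≠ ℓ) {Q : Quartet L}
    (hQ : Q ∈ infoContent G ψ) : ∀ pr ∈ Q, ℓ ∉ pr := by
  obtain ⟨x, y, -, a, b, c, d, -, -, ha, hb, hc, hd, rfl⟩ := hQ
  have hside : ∀ {m x y}, m ∈ sideLabels G ψ x y → m ≠ ℓ := by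
    rintro _ x y ⟨w, hw, -, rfl⟩
    exact hℓ w hw
  simp only [Sym2.mem_iff, forall_eq_or_imp, forall_eq, not_or]
  exact ⟨⟨(hside ha.1).symm, (hside hb.1).symm⟩, (hside hc.1).symm, (hside hd.1).symm⟩

end PruneLabelStep

theorem MulTree.deg_ne_two (T : MulTree V L) (v : V) : deg T.G v ≠ 2 := by
  intro h2
  have hv : v ∈ T.G.support :=
    Set.nonempty_of_ncard_ne_zero (s := T.G.neighborSet v) (by rw [← deg, h2]; norm_num)
  have := T.internal3 v hv (by rw [IsLeaf, h2]; norm_num)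
  omega

/-- If no quartet in `I(T)` involves the label `ℓ`, then the tree
obtained from `T` by deleting all leaves labeled `ℓ` (suppressing any resulting
degree-2 nodes, i.e. by repeatedly pruning `ℓ`-labeled leaves until none remain)
has the same information content as `T`. -/
theorem stmt17 (T : MulTree V L) (ℓ : L)
    (hno : ∀ q ∈ infoContent T.G T.ψ, ∀ p ∈ q, ℓ ∉ p)
    (H : SimpleGraph V)
    (hsteps : Relation.ReflTransGen (PruneLabelStep T.ψ ℓ) T.G H)
    (hdone : ∀ v, IsLeaf H v → T.ψ v ≠ ℓ) :
    infoContent H T.ψ = infoContent T.G T.ψ := by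
  have key := fun Q => mem_infoContent_iff_of_pruneLabelSteps (Q := Q) hsteps T.acyclic
    T.deg_ne_two
  ext Q
  exact ⟨fun hQ => (key Q (notMem_of_mem_infoContent hdone hQ)).mp hQ,
    fun hQ => (key Q (hno Q hQ)).mpr hQ⟩
end
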